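/- Let A be a real m×n matrix with n ≤ m, let x : Fin n → ℝ and b : Fin m → ℝ satisfy A.mulVec x = b. Then the vector determinants are proportional with factor x j: for every column index j : Fin n and every strictly monotone map f : Fin n → Fin m, x j · det(A.submatrix f id) = det((A.updateColumn j b).submatrix f id); i.e., x j • vdet A = vdet(A.updateColumn j b). -/

import Mathlib

/-! Cramer's rule applied to each maximal square submatrix. Selecting the rows `f` of `A x = b`
gives `(A.submatrix f id) x = b ∘ f`, and selecting rows commutes with replacing column `j`, so the
identity for the component `f` is Cramer's rule `x j * det M = det (M.updateCol j (M x))` for the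
square matrix `M = A.submatrix f id`. -/

open Matrix

/-- The vector determinant of a tall real matrix: the family of determinants of its maximal
square submatrices, indexed by the strictly monotone maps `f : Fin n → Fin m`. -/
noncomputable def vdet {m n : ℕ} (A : Matrix (Fin m) (Fin n) ℝ) : (Fin n ↪o Fin m) → ℝ :=
  fun f => (A.submatrix f id).det

namespace Matrix

variable {l m n R : Type*}

theorem submatrix_id_updateCol [DecidableEq n] (A : Matrix m n R) (f : l → m) (j : n)
    (c : m → R) : (A.updateCol j c).submatrix f id = (A.submatrix f id).updateCol j (c ∘ f) := by
  ext i k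
  by_cases h : k = j <;> simp [h]

theorem submatrix_id_mulVec [Fintype n] [NonUnitalNonAssocSemiring R] (A : Matrix m n R)
    (f : l → m) (x : n → R) : A.submatrix f id *ᵥ x = (A *ᵥ x) ∘ f :=
  rfl

variable [CommRing R] [Fintype n] [DecidableEq n]

theorem cramer_mulVec (M : Matrix n n R) (x : n → R) : cramer M (M *ᵥ x) = M.det • x := by
  rw [cramer_eq_adjugate_mulVec, mulVec_mulVec, adjugate_mul, smul_mulVec, one_mulVec]

theorem mul_det_eq_det_updateCol_mulVec (M : Matrix n n R) (x : n → R) (j : n) :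
    x j * M.det = (M.updateCol j (M *ᵥ x)).det := by
  rw [← cramer_apply, cramer_mulVec, Pi.smul_apply, smul_eq_mul, mul_comm]

theorem mul_det_submatrix_eq_det_submatrix_updateCol_mulVec (A : Matrix m n R) (f : n → m)
    (x : n → R) (j : n) :
    x j * (A.submatrix f id).det = ((A.updateCol j (A *ᵥ x)).submatrix f id).det := by
  rw [submatrix_id_updateCol, ← submatrix_id_mulVec, mul_det_eq_det_updateCol_mulVec]

end Matrix

theorem smul_vdet_eq_vdet_updateColumn_general {m n : ℕ}
    (A : Matrix (Fin m) (Fin n) ℝ) (x : Fin n → ℝ) (b : Fin m → ℝ)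
    (hxb : A.mulVec x = b) (j : Fin n) :
    (∀ f : Fin n ↪o Fin m,
      x j * (A.submatrix f id).det = ((A.updateCol j b).submatrix f id).det) ∧
    x j • vdet A = vdet (A.updateCol j b) := by
  subst hxb
  have h (f : Fin n ↪o Fin m) := mul_det_submatrix_eq_det_submatrix_updateCol_mulVec A f x j
  exact ⟨h, funext h⟩

/-- Cramer's rule for the vector determinant: if `A.mulVec x = b` then for every column
index `j`, `x j • vdet A = vdet (A with column j replaced by b)`, componentwise over all
strictly monotone `f : Fin n → Fin m`. -/
theorem smul_vdet_eq_vdet_updateColumn {m n : ℕ} (hn : n ≤ m)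
    (A : Matrix (Fin m) (Fin n) ℝ) (x : Fin n → ℝ) (b : Fin m → ℝ)
    (hxb : A.mulVec x = b) (j : Fin n) :
    (∀ f : Fin n ↪o Fin m,
      x j * (A.submatrix f id).det = ((A.updateCol j b).submatrix f id).det) ∧
    x j • vdet A = vdet (A.updateCol j b) :=
  smul_vdet_eq_vdet_updateColumn_general A x b hxb j
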